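/- arXiv:1002.2696 — 5 statements merged into one kernel-verified Lean document; each statement's English description precedes it below -/
import Mathlib

section
/- Let A be an n×n J-sign-symmetric real matrix. Then the spectral radius ρ(A) ≥ 0 is an eigenvalue of A. -/
open Matrix Complex Finset

/-- The multiset of complex eigenvalues (listed with algebraic multiplicity) of a real
square matrix, i.e. the roots of its characteristic polynomial over `ℂ`. -/
noncomputable def specM {ι : Type*} [Fintype ι] [DecidableEq ι]
    (A : Matrix ι ι ℝ) : Multiset ℂ :=
  (A.map Complex.ofReal).charpoly.roots

/-- The spectral radius: maximum modulus of the complex eigenvalues. -/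
noncomputable def specRad {ι : Type*} [Fintype ι] [DecidableEq ι]
    (A : Matrix ι ι ℝ) : ℝ :=
  sSup ((fun z : ℂ => ‖z‖) '' {z : ℂ | z ∈ specM A})

open Classical in
/-- The algebraic multiplicity of `z` as an eigenvalue of `A`. -/
noncomputable def algMult {ι : Type*} [Fintype ι] [DecidableEq ι]
    (A : Matrix ι ι ℝ) (z : ℂ) : ℕ :=
  Multiset.count z (specM A)

open Classical in
/-- The number of eigenvalues of `A` (with algebraic multiplicity) of modulus `r`. -/
noncomputable def countModulus {ι : Type*} [Fintype ι] [DecidableEq ι]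
    (A : Matrix ι ι ℝ) (r : ℝ) : ℕ :=
  Multiset.card ((specM A).filter fun z => ‖z‖ = r)

/-- `h(A)`: the number of eigenvalues of `A` (with algebraic multiplicity) whose
modulus equals the spectral radius. -/
noncomputable def perCount {ι : Type*} [Fintype ι] [DecidableEq ι]
    (A : Matrix ι ι ℝ) : ℕ :=
  countModulus A (specRad A)

/-- `J` is a witness of `J`-sign-symmetricity for `A`: (a) `A i j ≤ 0` whenever exactly one
of `i`, `j` belongs to `J`, and (b) whenever `A i j < 0`, exactly one of `i`, `j` is in `J`. -/
def IsJWitness {ι : Type*} [Fintype ι] [DecidableEq ι]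
    (A : Matrix ι ι ℝ) (J : Finset ι) : Prop :=
  (∀ i j, Xor' (i ∈ J) (j ∈ J) → A i j ≤ 0) ∧
  (∀ i j, A i j < 0 → Xor' (i ∈ J) (j ∈ J))

/-- A matrix is `J`-sign-symmetric if some witness set `J` exists. -/
def JSignSym {ι : Type*} [Fintype ι] [DecidableEq ι] (A : Matrix ι ι ℝ) : Prop :=
  ∃ J : Finset ι, IsJWitness A J

/-- A square matrix is reducible if, after a simultaneous permutation of rows and columns,
it has block form `[[A₁, 0], [B, A₂]]`; equivalently there is a nonempty proper index set `S`
with `A i j = 0` for all `i ∈ S`, `j ∉ S`. -/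
def IsReducibleMat {ι : Type*} [Fintype ι] [DecidableEq ι] (A : Matrix ι ι ℝ) : Prop :=
  ∃ S : Finset ι, S.Nonempty ∧ S ≠ Finset.univ ∧ ∀ i ∈ S, ∀ j ∉ S, A i j = 0

/-- A square matrix is irreducible if it is not reducible. -/
def IsIrredMat {ι : Type*} [Fintype ι] [DecidableEq ι] (A : Matrix ι ι ℝ) : Prop :=
  ¬ IsReducibleMat A

/-- Index type of the second compound matrix: pairs `(i, j)` with `i < j`. -/
abbrev Idx2 (n : ℕ) := {p : Fin n × Fin n // p.1 < p.2}

/-- The second compound matrix of `A`: its entry at `((i,j),(k,l))` is the minor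
`a_{ik} a_{jl} - a_{il} a_{jk}`. -/
def compound2 {n : ℕ} (A : Matrix (Fin n) (Fin n) ℝ) : Matrix (Idx2 n) (Idx2 n) ℝ :=
  fun p q => A p.1.1 q.1.1 * A p.1.2 q.1.2 - A p.1.1 q.1.2 * A p.1.2 q.1.1

/-- `W` satisfies conditions (1) and (2): `W ∪ W̃` is everything and `W ∩ W̃ = Δ`. -/
def WCond {n : ℕ} (W : Finset (Fin n × Fin n)) : Prop :=
  (∀ p : Fin n × Fin n, p ∈ W ∨ p.swap ∈ W) ∧
  (∀ p : Fin n × Fin n, (p ∈ W ∧ p.swap ∈ W) ↔ p.1 = p.2)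

/-- Index type of the `W`-matrix: the pairs in `W ∖ Δ`. -/
abbrev WIdx {n : ℕ} (W : Finset (Fin n × Fin n)) := {p : Fin n × Fin n // p ∈ W ∧ p.1 ≠ p.2}

/-- The `W`-matrix `A_W^{(2)}`: rows and columns indexed by `W ∖ Δ`, entries the `2×2` minors. -/
def Wmatrix {n : ℕ} (A : Matrix (Fin n) (Fin n) ℝ) (W : Finset (Fin n × Fin n)) :
    Matrix (WIdx W) (WIdx W) ℝ :=
  fun p q => A p.1.1 q.1.1 * A p.1.2 q.1.2 - A p.1.1 q.1.2 * A p.1.2 q.1.1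

/-- The set `Ŵ(J, J̃)` built from a witness `J` for `A` and a witness `J̃` for `A^{(2)}`. -/
def WhatSet {n : ℕ} (J : Finset (Fin n)) (Jt : Finset (Idx2 n)) : Set (Fin n × Fin n) :=
  {p | (∃ h : p.1 < p.2,
          ((p.1 ∈ J ↔ p.2 ∈ J) ∧ (⟨p, h⟩ : Idx2 n) ∈ Jt) ∨
          (¬(p.1 ∈ J ↔ p.2 ∈ J) ∧ (⟨p, h⟩ : Idx2 n) ∉ Jt)) ∨
       (∃ h : p.2 < p.1,
          ((p.1 ∈ J ↔ p.2 ∈ J) ∧ (⟨(p.2, p.1), h⟩ : Idx2 n) ∉ Jt) ∨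
          (¬(p.1 ∈ J ↔ p.2 ∈ J) ∧ (⟨(p.2, p.1), h⟩ : Idx2 n) ∈ Jt))}

/-- A set of pairs is transitive if `(i,j) ∈ W` and `(j,k) ∈ W` imply `(i,k) ∈ W`. -/
def TransPairs {n : ℕ} (W : Set (Fin n × Fin n)) : Prop :=
  ∀ i j k : Fin n, (i, j) ∈ W → (j, k) ∈ W → (i, k) ∈ W

/-- Two square matrices are similar if `M = S N S⁻¹` for some invertible `S`. -/
def SimilarMat {ι : Type*} [Fintype ι] [DecidableEq ι] (M N : Matrix ι ι ℝ) : Prop :=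
  ∃ S : Matrix ι ι ℝ, IsUnit S ∧ M = S * N * S⁻¹

/-!
Conjugating `A` by the signature matrix `D = diag(±1)` of a witness `J` yields the entrywise
nonnegative matrix `DAD`, which has the same characteristic polynomial. For a nonnegative matrix
`B` the Neumann series `(z - B)⁻¹ = ∑ z⁻⁽ᵏ⁺¹⁾ Bᵏ` gives `‖(z - B)⁻¹‖ ≤ ‖(|z| - B)⁻¹‖` for
`|z| > ρ(B)`. Along the ray through an eigenvalue `λ` with `|λ| = ρ`, the resolvent blows up like
`1 / (t - ρ)`; so `‖(t - B)⁻¹‖ → ∞` as `t ↓ ρ`, which is impossible if `ρ` were in the resolvent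
set, where the resolvent is continuous.
-/

open Filter Topology
open scoped NNReal ENNReal

theorem tendsto_sub_inv_nhdsGT (ρ : ℝ) : Tendsto (fun t : ℝ => (t - ρ)⁻¹) (𝓝[>] ρ) atTop := by
  refine Tendsto.inv_tendsto_nhdsGT_zero (tendsto_nhdsWithin_iff.mpr ⟨?_, ?_⟩)
  · simpa only [sub_self] using
      ((continuous_sub_right ρ).tendsto ρ).mono_left (nhdsWithin_le_nhds (s := Set.Ioi ρ))
  · filter_upwards [self_mem_nhdsWithin] with t (ht : ρ < t) using sub_pos.mpr ht

namespace spectrum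

variable {A : Type*} [NormedRing A] [NormedAlgebra ℂ A] [CompleteSpace A]

lemma eventually_norm_pow_le (a : A) {r : ℝ≥0} (h : spectralRadius ℂ a < r) :
    ∀ᶠ k in atTop, ‖a ^ k‖ ≤ r ^ k := by
  filter_upwards [(pow_nnnorm_pow_one_div_tendsto_nhds_spectralRadius a).eventually_lt_const h,
    eventually_gt_atTop 0] with k hk hk0
  rw [one_div, ENNReal.rpow_inv_lt_iff (by positivity), ENNReal.rpow_natCast] at hk
  exact_mod_cast hk.le

lemma hasSum_resolvent {a : A} {z : ℂ} (h : spectralRadius ℂ a < ‖z‖₊) :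
    HasSum (fun k : ℕ => z⁻¹ ^ (k + 1) • a ^ k) (resolvent a z) := by
  obtain ⟨r, hr, hrz⟩ := ENNReal.lt_iff_exists_nnreal_btwn.mp h
  have hz : z ≠ 0 := by rintro rfl; simp at hrz
  set x := z⁻¹ • a
  have hx : Summable (x ^ ·) := by
    have hrz' : (r : ℝ) / ‖z‖ < 1 := (div_lt_one (norm_pos_iff.mpr hz)).mpr (by exact_mod_cast hrz)
    refine Summable.of_norm_bounded_eventually_nat
      (summable_geometric_of_lt_one (by positivity) hrz') ?_
    filter_upwards [eventually_norm_pow_le a hr] with k hk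
    rw [smul_pow, norm_smul, norm_pow, norm_inv, div_pow, div_eq_inv_mul, ← inv_pow]
    gcongr
  have hxa : algebraMap ℂ A z - a = z • (1 - x) := by
    rw [smul_sub, smul_smul, mul_inv_cancel₀ hz, one_smul, Algebra.algebraMap_eq_smul_one]
  have hres : resolvent a z = z⁻¹ • ∑' k, x ^ k :=
    Ring.inverse_unit ⟨algebraMap ℂ A z - a, z⁻¹ • ∑' k, x ^ k,
      by rw [hxa, smul_mul_smul_comm, mul_inv_cancel₀ hz, one_smul, hx.one_sub_mul_tsum_pow],
      by rw [hxa, smul_mul_smul_comm, inv_mul_cancel₀ hz, one_smul, hx.tsum_pow_mul_one_sub]⟩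
  rw [hres]
  convert hx.hasSum.const_smul z⁻¹ using 1
  ext k
  rw [smul_pow, smul_smul, pow_succ']

lemma one_le_norm_sub_mul_norm_resolvent {a : A} {μ z : ℂ} (hμ : μ ∈ spectrum ℂ a)
    (hz : z ∈ resolventSet ℂ a) : 1 ≤ ‖z - μ‖ * ‖resolvent a z‖ := by
  by_contra! hlt
  have hsmall : ‖(z - μ) • resolvent a z‖ < 1 := by rwa [norm_smul]
  have hfactor : algebraMap ℂ A μ - a =
      (algebraMap ℂ A z - a) * (1 - (z - μ) • resolvent a z) := by
    rw [mul_sub, mul_one, mul_smul_comm, resolvent,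
      Ring.mul_inverse_cancel _ (mem_resolventSet_iff.mp hz),
      Algebra.algebraMap_eq_smul_one, Algebra.algebraMap_eq_smul_one]
    module
  exact hμ (mem_resolventSet_iff.mpr
    (hfactor ▸ (mem_resolventSet_iff.mp hz).mul (isUnit_one_sub_of_norm_lt_one hsmall)))

lemma inv_sub_le_norm_resolvent {a : A}
    (h : ∀ z : ℂ, spectralRadius ℂ a < ‖z‖₊ → ‖resolvent a z‖ ≤ ‖resolvent a (‖z‖ : ℂ)‖)
    {μ : ℂ} (hμ : μ ∈ spectrum ℂ a) (hμa : ‖μ‖₊ = spectralRadius ℂ a) (hμ0 : μ ≠ 0)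
    {t : ℝ} (ht : ‖μ‖ < t) : (t - ‖μ‖)⁻¹ ≤ ‖resolvent a (t : ℂ)‖ := by
  have hρ0 : 0 < ‖μ‖ := norm_pos_iff.mpr hμ0
  set z : ℂ := ((t / ‖μ‖ : ℝ) : ℂ) * μ
  have hzt : ‖z‖ = t := by
    rw [norm_mul, Complex.norm_real, Real.norm_of_nonneg (div_pos (hρ0.trans ht) hρ0).le,
      div_mul_cancel₀ _ hρ0.ne']
  have hzμ : ‖z - μ‖ = t - ‖μ‖ := by
    rw [show z - μ = ((t / ‖μ‖ - 1 : ℝ) : ℂ) * μ by simp only [z]; push_cast; ring, norm_mul,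
      Complex.norm_real, Real.norm_of_nonneg (by rw [sub_nonneg, one_le_div hρ0]; exact ht.le),
      sub_mul, div_mul_cancel₀ _ hρ0.ne', one_mul]
  have hz : spectralRadius ℂ a < ‖z‖₊ := by
    rw [← hμa, ENNReal.coe_lt_coe, ← NNReal.coe_lt_coe, coe_nnnorm, coe_nnnorm, hzt]
    exact ht
  rw [inv_le_iff_one_le_mul₀' (sub_pos.mpr ht)]
  calc 1 ≤ ‖z - μ‖ * ‖resolvent a z‖ :=
        one_le_norm_sub_mul_norm_resolvent hμ (mem_resolventSet_of_spectralRadius_lt hz)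
    _ ≤ (t - ‖μ‖) * ‖resolvent a (t : ℂ)‖ := by
      rw [hzμ]; gcongr; simpa [hzt] using h z hz

theorem spectralRadius_toReal_mem_of_norm_resolvent_le [Nontrivial A] {a : A}
    (h : ∀ z : ℂ, spectralRadius ℂ a < ‖z‖₊ → ‖resolvent a z‖ ≤ ‖resolvent a (‖z‖ : ℂ)‖) :
    ((spectralRadius ℂ a).toReal : ℂ) ∈ spectrum ℂ a := by
  obtain ⟨μ, hμ, hμa⟩ := exists_nnnorm_eq_spectralRadius_of_nonempty (spectrum.nonempty a)
  rw [← hμa, ENNReal.coe_toReal, coe_nnnorm]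
  by_contra hρ
  have hμ0 : μ ≠ 0 := fun hμ0 => hρ (by simpa [hμ0] using hμ)
  have hblowup : Tendsto (fun t : ℝ => ‖resolvent a (t : ℂ)‖) (𝓝[>] ‖μ‖) atTop :=
    tendsto_atTop_mono' _ (eventually_nhdsWithin_of_forall fun t ht =>
      inv_sub_le_norm_resolvent h hμ hμa hμ0 ht) (tendsto_sub_inv_nhdsGT ‖μ‖)
  have hcont : ContinuousAt (fun t : ℝ => resolvent a (t : ℂ)) ‖μ‖ :=
    (hasDerivAt_resolvent_const_left (a := a)
      (mem_resolventSet_iff.mpr (notMem_iff.mp hρ))).continuousAt.comp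
      Complex.continuous_ofReal.continuousAt
  exact not_tendsto_atTop_of_tendsto_nhds (hcont.norm.mono_left nhdsWithin_le_nhds) hblowup

end spectrum

namespace Matrix

variable {ι : Type*} [Fintype ι] [DecidableEq ι]

attribute [local instance] Matrix.linftyOpNormedAddCommGroup Matrix.linftyOpNormedRing
  Matrix.linftyOpNormedAlgebra

lemma linfty_opNorm_le_of_norm_apply_le {m n α β : Type*} [Fintype m] [Fintype n]
    [NormedAddCommGroup α] [NormedAddCommGroup β] {M : Matrix m n α} {N : Matrix m n β}
    (h : ∀ i j, ‖M i j‖ ≤ ‖N i j‖) : ‖M‖ ≤ ‖N‖ := by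
  rw [linfty_opNorm_def, linfty_opNorm_def, NNReal.coe_le_coe]
  exact Finset.sup_mono_fun fun i _ => Finset.sum_le_sum fun j _ => h i j

lemma norm_resolvent_le_of_nonneg {B : Matrix ι ι ℝ} (hB : ∀ i j, 0 ≤ B i j) {z : ℂ}
    (hz : spectralRadius ℂ (B.map Complex.ofReal) < ‖z‖₊) :
    ‖resolvent (B.map Complex.ofReal) z‖ ≤ ‖resolvent (B.map Complex.ofReal) (‖z‖ : ℂ)‖ := by
  have hsum : ∀ w : ℂ, spectralRadius ℂ (B.map Complex.ofReal) < ‖w‖₊ → ∀ i j,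
      HasSum (fun k : ℕ => w⁻¹ ^ (k + 1) * ((B ^ k) i j : ℂ))
        (resolvent (B.map Complex.ofReal) w i j) := by
    intro w hw i j
    have hres := spectrum.hasSum_resolvent hw
    refine (Pi.hasSum.mp (Pi.hasSum.mp hres i) j).congr_fun fun k => ?_
    have hpow : (B.map Complex.ofReal) ^ k = (B ^ k).map Complex.ofReal :=
      (Matrix.map_pow B Complex.ofRealHom k).symm
    show _ = (w⁻¹ ^ (k + 1) • (B.map Complex.ofReal) ^ k) i j
    rw [smul_apply, smul_eq_mul, hpow, map_apply]
  have hz' : spectralRadius ℂ (B.map Complex.ofReal) < ‖(‖z‖ : ℂ)‖₊ := by simpa using hz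
  refine linfty_opNorm_le_of_norm_apply_le fun i j => ?_
  refine ((hsum z hz i j).norm_le_of_bounded (Complex.hasSum_re (hsum _ hz' i j)) fun k => ?_).trans
    (Complex.re_le_norm _)
  rw [← Complex.ofReal_inv, ← Complex.ofReal_pow, ← Complex.ofReal_mul, Complex.ofReal_re,
    norm_mul, norm_pow, norm_inv, Complex.norm_real,
    Real.norm_of_nonneg (pow_apply_nonneg hB k i j)]

theorem spectralRadius_toReal_mem_spectrum_of_nonneg [Nonempty ι] {B : Matrix ι ι ℝ}
    (hB : ∀ i j, 0 ≤ B i j) :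
    ((spectralRadius ℂ (B.map Complex.ofReal)).toReal : ℂ) ∈ spectrum ℂ (B.map Complex.ofReal) :=
  spectrum.spectralRadius_toReal_mem_of_norm_resolvent_le fun _ hz =>
    norm_resolvent_le_of_nonneg hB hz

end Matrix

section SpecRad

variable {ι : Type*} [Fintype ι] [DecidableEq ι]

lemma mem_specM_iff {A : Matrix ι ι ℝ} {z : ℂ} :
    z ∈ specM A ↔ z ∈ spectrum ℂ (A.map Complex.ofReal) := by
  rw [specM, Polynomial.mem_roots (charpoly_monic _).ne_zero, mem_spectrum_iff_isRoot_charpoly]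

lemma specRad_eq_toReal_spectralRadius (A : Matrix ι ι ℝ) :
    specRad A = (spectralRadius ℂ (A.map Complex.ofReal)).toReal := by
  set S := {z : ℂ | z ∈ specM A}
  have hρ : specRad A = sSup ((‖·‖) '' S) := rfl
  have hS : spectralRadius ℂ (A.map Complex.ofReal) = ⨆ z ∈ S, (‖z‖₊ : ℝ≥0∞) := by
    simp only [spectralRadius, S, Set.mem_ofPred_eq, mem_specM_iff]
  rw [hρ, hS]
  rcases S.eq_empty_or_nonempty with hempty | hne
  · simp [hempty]
  obtain ⟨μ, hμ, hmax⟩ := S.exists_max_image (‖·‖) (specM A).finite_toSet hne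
  have hsup : ⨆ z ∈ S, (‖z‖₊ : ℝ≥0∞) = ‖μ‖₊ :=
    le_antisymm (iSup₂_le fun z hz => ENNReal.coe_le_coe.mpr (hmax z hz))
      (le_iSup₂ (f := fun z _ => (‖z‖₊ : ℝ≥0∞)) μ hμ)
  rw [hsup, ENNReal.coe_toReal, coe_nnnorm]
  exact IsGreatest.csSup_eq ⟨Set.mem_image_of_mem _ hμ, Set.forall_mem_image.mpr hmax⟩

lemma specRad_nonneg (A : Matrix ι ι ℝ) : 0 ≤ specRad A :=
  Real.sSup_nonneg (Set.forall_mem_image.mpr fun z _ => norm_nonneg z)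

lemma specRad_mem_specM_of_nonneg [Nonempty ι] {B : Matrix ι ι ℝ} (hB : ∀ i j, 0 ≤ B i j) :
    (specRad B : ℂ) ∈ specM B := by
  rw [mem_specM_iff, specRad_eq_toReal_spectralRadius]
  exact spectralRadius_toReal_mem_spectrum_of_nonneg hB

lemma specM_mul_mul_of_mul_self_eq_one {D : Matrix ι ι ℝ} (hD : D * D = 1) (A : Matrix ι ι ℝ) :
    specM (D * A * D) = specM A := by
  have hmap : ∀ M : Matrix ι ι ℝ,
      (M.map Complex.ofReal).charpoly = M.charpoly.map Complex.ofRealHom :=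
    fun M => charpoly_map M Complex.ofRealHom
  have hchar : (D * A * D).charpoly = A.charpoly := by
    simpa [inv_eq_left_inv hD] using charpoly_units_conj ⟨D, D, hD, hD⟩ A
  rw [specM, specM, hmap, hmap, hchar]

lemma specRad_mul_mul_of_mul_self_eq_one {D : Matrix ι ι ℝ} (hD : D * D = 1)
    (A : Matrix ι ι ℝ) : specRad (D * A * D) = specRad A := by
  rw [specRad, specRad, specM_mul_mul_of_mul_self_eq_one hD]

def signDiagonal (J : Finset ι) : Matrix ι ι ℝ :=
  diagonal fun i => if i ∈ J then -1 else 1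

lemma signDiagonal_mul_self (J : Finset ι) : signDiagonal J * signDiagonal J = 1 := by
  rw [signDiagonal, diagonal_mul_diagonal, ← diagonal_one]
  congr 1
  funext i
  split_ifs <;> norm_num

lemma IsJWitness.signDiagonal_conj_nonneg {A : Matrix ι ι ℝ} {J : Finset ι}
    (hJ : IsJWitness A J) (i j : ι) : 0 ≤ (signDiagonal J * A * signDiagonal J) i j := by
  obtain ⟨hxor, hnonneg⟩ := hJ
  rw [signDiagonal, mul_diagonal, diagonal_mul]
  by_cases hx : Xor (i ∈ J) (j ∈ J)
  · have hA := hxor i j hx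
    rcases hx with ⟨hi, hj⟩ | ⟨hj, hi⟩ <;> simp [hi, hj, hA]
  · have hA : 0 ≤ A i j := not_lt.mp (mt (hnonneg i j) hx)
    by_cases hi : i ∈ J <;> by_cases hj : j ∈ J <;> simp_all [Xor]

end SpecRad

/-- the spectral radius of a `J`-sign-symmetric matrix is a nonnegative
eigenvalue of the matrix. -/
theorem stmt1 {n : ℕ} (hn : 0 < n) (A : Matrix (Fin n) (Fin n) ℝ) (hA : JSignSym A) :
    0 ≤ specRad A ∧ ((specRad A : ℂ) ∈ specM A) := by
  obtain ⟨J, hJ⟩ := hA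
  have : Nonempty (Fin n) := ⟨⟨0, hn⟩⟩
  have hD := signDiagonal_mul_self J
  rw [← specRad_mul_mul_of_mul_self_eq_one hD, ← specM_mul_mul_of_mul_self_eq_one hD]
  exact ⟨specRad_nonneg _, specRad_mem_specM_of_nonneg hJ.signDiagonal_conj_nonneg⟩
end

section
/- Let A be an n×n J-sign-symmetric real matrix and suppose that at least one diagonal entry a_{ii} is nonzero. Then the spectral radius ρ(A) is strictly positive and is a (positive) eigenvalue of A. -/
/-!
With `s = jSign J`, a witness `J` is exactly the condition that `s i * a i j * s j ≥ 0`; this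
condition is stable under matrix products, so `J` witnesses every power of `A`, and every power
sum `∑ λᵏ = tr (Aᵏ)` of the eigenvalues of `A` is a nonnegative real number. The trace itself is
positive when a diagonal entry is nonzero, hence so is the spectral radius `ρ`.

Now let `z₀` be an eigenvalue of modulus `ρ`, `tₖ = ∑ (λ/ρ)ᵏ ≥ 0` and `b = z̄₀/ρ`. Then
`‖∑_{k<N} tₖ bᵏ‖ ≤ ∑_{k<N} tₖ`, and after dividing by `N` the two sides tend to the multiplicities
of `z₀` and of `ρ`, since the Cesàro means of `wᵏ` tend to `[w = 1]` for `‖w‖ ≤ 1`. So `ρ` is an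
eigenvalue.
-/

open Matrix Complex Finset

section TracePow

open Polynomial Module

variable {K V : Type*} [Field K] [AddCommGroup V] [Module K V]

theorem Module.End.trace_pow_eq_pow_mul_finrank {R M : Type*} [CommRing R] [IsReduced R]
    [AddCommGroup M] [Module R M] [Module.Free R M] [Module.Finite R M]
    {f : End R M} {μ : R} (hf : IsNilpotent (f - algebraMap R (End R M) μ)) (k : ℕ) :
    LinearMap.trace R M (f ^ k) = μ ^ k * finrank R M := by
  induction k with
  | zero => simp
  | succ k ih =>
    rw [pow_succ, End.mul_eq_comp,
      LinearMap.trace_comp_eq_mul_of_commute_of_isNilpotent μ (Commute.pow_left rfl k) hf, ih,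
      pow_succ]
    ring

theorem Module.End.trace_pow_eq_sum_roots_charpoly_pow [IsAlgClosed K] [FiniteDimensional K V]
    (f : End K V) (k : ℕ) :
    LinearMap.trace K V (f ^ k) = (f.charpoly.roots.map (· ^ k)).sum := by
  classical
  have hinternal := DirectSum.isInternal_submodule_of_iSupIndep_of_iSup_eq_top
    f.independent_maxGenEigenspace f.iSup_maxGenEigenspace_eq_top
  have hfin := WellFoundedGT.finite_ne_bot_of_iSupIndep f.independent_maxGenEigenspace
  have hmaps : ∀ μ, Set.MapsTo (f ^ k) (f.maxGenEigenspace μ) (f.maxGenEigenspace μ) :=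
    f.mapsTo_maxGenEigenspace_of_comm (Commute.self_pow f k)
  have hsupport : hfin.toFinset = f.charpoly.roots.toFinset := by
    ext μ
    rw [Set.Finite.mem_toFinset, Set.mem_ofPred_eq, Multiset.mem_toFinset,
      mem_roots f.charpoly_monic.ne_zero, ← rootMultiplicity_pos f.charpoly_monic.ne_zero,
      ← f.finrank_maxGenEigenspace_eq, Nat.pos_iff_ne_zero]
    exact Submodule.finrank_eq_zero.not.symm
  -- On `maxGenEigenspace μ`, `f - μ` is nilpotent and the dimension is the multiplicity of `μ`.
  rw [LinearMap.trace_eq_sum_trace_restrict' hinternal hfin hmaps, hsupport,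
    Finset.sum_multiset_map_count]
  refine Finset.sum_congr rfl fun μ _ => ?_
  rw [count_roots, ← f.finrank_maxGenEigenspace_eq, nsmul_eq_mul, mul_comm,
    ← Module.End.pow_restrict k (f.mapsTo_maxGenEigenspace_of_comm rfl μ)]
  exact trace_pow_eq_pow_mul_finrank (f.isNilpotent_restrict_maxGenEigenspace_sub_algebraMap μ) k

theorem Matrix.trace_pow_eq_sum_roots_charpoly_pow {ι : Type*} [Fintype ι] [DecidableEq ι]
    [IsAlgClosed K] (A : Matrix ι ι K) (k : ℕ) :
    (A ^ k).trace = (A.charpoly.roots.map (· ^ k)).sum := by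
  rw [← Matrix.trace_toLin'_eq, Matrix.toLin'_pow, ← Matrix.charpoly_toLin',
    Module.End.trace_pow_eq_sum_roots_charpoly_pow]

end TracePow

section PowerSums

open Filter Topology ComplexConjugate
open scoped ComplexOrder

theorem Complex.tendsto_inv_mul_sum_range_pow {w : ℂ} (hw : ‖w‖ ≤ 1) :
    Tendsto (fun N : ℕ => (N : ℂ)⁻¹ * ∑ k ∈ Finset.range N, w ^ k) atTop
      (𝓝 (if w = 1 then 1 else 0)) := by
  split_ifs with h
  · subst h
    refine tendsto_const_nhds.congr' ?_
    filter_upwards [eventually_ge_atTop 1] with N hN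
    have hN0 : (N : ℂ) ≠ 0 := Nat.cast_ne_zero.mpr (Nat.one_le_iff_ne_zero.mp hN)
    simp [inv_mul_cancel₀ hN0]
  · have hw1 : 0 < ‖w - 1‖ := norm_pos_iff.mpr (sub_ne_zero.mpr h)
    have hbound : ∀ N : ℕ,
        ‖(N : ℂ)⁻¹ * ∑ k ∈ Finset.range N, w ^ k‖ ≤ ‖(N : ℂ)⁻¹‖ * (2 / ‖w - 1‖) := by
      intro N
      rw [norm_mul, geom_sum_eq h, norm_div]
      gcongr
      calc ‖w ^ N - 1‖ ≤ ‖w ^ N‖ + ‖(1 : ℂ)‖ := norm_sub_le _ _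
        _ ≤ 2 := by rw [norm_pow, norm_one]; linarith [pow_le_one₀ (norm_nonneg w) hw (n := N)]
    refine squeeze_zero_norm hbound ?_
    simpa using (tendsto_inv_atTop_nhds_zero_nat (𝕜 := ℂ)).norm.mul_const (2 / ‖w - 1‖)

theorem Multiset.tendsto_inv_mul_sum_range_sum_pow (R : Multiset ℂ) (hR : ∀ w ∈ R, ‖w‖ ≤ 1) :
    Tendsto (fun N : ℕ => (N : ℂ)⁻¹ * ∑ k ∈ Finset.range N, (R.map (· ^ k)).sum) atTop
      (𝓝 (R.count 1)) := by
  induction R using Multiset.induction_on with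
  | empty => simp
  | cons a R ih =>
    have ha := Complex.tendsto_inv_mul_sum_range_pow (hR a (Multiset.mem_cons_self a R))
    have hR' := ih fun w hw => hR w (Multiset.mem_cons_of_mem hw)
    simp only [Multiset.map_cons, Multiset.sum_cons, sum_add_distrib, mul_add,
      Multiset.count_cons, eq_comm (a := (1 : ℂ))]
    push_cast
    simpa only [add_comm] using ha.add hR'

theorem Complex.norm_sum_mul_le_norm_sum_of_nonneg {ι : Type*} {s : Finset ι} {t u : ι → ℂ}
    (ht : ∀ i, 0 ≤ t i) (hu : ∀ i ∈ s, ‖u i‖ ≤ 1) :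
    ‖∑ i ∈ s, t i * u i‖ ≤ ‖∑ i ∈ s, t i‖ := by
  calc ‖∑ i ∈ s, t i * u i‖ ≤ ∑ i ∈ s, ‖t i‖ := by
        refine (norm_sum_le _ _).trans (Finset.sum_le_sum fun i hi => ?_)
        rw [norm_mul]
        exact mul_le_of_le_one_right (norm_nonneg _) (hu i hi)
    _ = ‖∑ i ∈ s, t i‖ := by
        conv_rhs => rw [Finset.sum_congr rfl fun i _ => Complex.eq_coe_norm_of_nonneg (ht i)]
        rw [← Complex.ofReal_sum, Complex.norm_real, Real.norm_of_nonneg (by positivity)]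

theorem Multiset.ofReal_norm_mem_of_sum_pow_nonneg (R : Multiset ℂ)
    (hR : ∀ k : ℕ, 0 ≤ (R.map (· ^ k)).sum) {z₀ : ℂ} (hz₀ : z₀ ∈ R)
    (hmax : ∀ z ∈ R, ‖z‖ ≤ ‖z₀‖) : (‖z₀‖ : ℂ) ∈ R := by
  rcases (norm_nonneg z₀).eq_or_lt with hρ | hρ
  · rwa [← hρ, Complex.ofReal_zero, ← norm_eq_zero.mp hρ.symm]
  set ρ : ℂ := (‖z₀‖ : ℂ)
  have hρ0 : ρ ≠ 0 := Complex.ofReal_ne_zero.mpr hρ.ne'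
  set a : Multiset ℂ := R.map (· / ρ)
  set b : ℂ := conj z₀ / ρ
  have hb : ‖b‖ = 1 := by simp [b, ρ, hρ.ne']
  have ha : ∀ w ∈ a, ‖w‖ ≤ 1 := Multiset.forall_mem_map_iff.mpr fun z hz => by
    rw [norm_div, Complex.norm_real, norm_norm]
    exact div_le_one_of_le₀ (hmax z hz) hρ.le
  have hab : ∀ w ∈ a.map (· * b), ‖w‖ ≤ 1 := Multiset.forall_mem_map_iff.mpr fun w hw => by
    rw [norm_mul, hb, mul_one]
    exact ha w hw
  have hnonneg : ∀ k, 0 ≤ (a.map (· ^ k)).sum := by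
    intro k
    have hsum : (a.map (· ^ k)).sum = (R.map (· ^ k)).sum / ρ ^ k := by
      simp only [a, Multiset.map_map, Function.comp_def, div_pow, Multiset.sum_map_div]
    rw [hsum, div_eq_mul_inv, ← Complex.ofReal_pow, ← Complex.ofReal_inv]
    exact mul_nonneg (hR k) (Complex.zero_le_real.mpr (by positivity))
  have hle : ∀ N : ℕ, ‖(N : ℂ)⁻¹ * ∑ k ∈ Finset.range N, ((a.map (· * b)).map (· ^ k)).sum‖
      ≤ ‖(N : ℂ)⁻¹ * ∑ k ∈ Finset.range N, (a.map (· ^ k)).sum‖ := by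
    intro N
    simp only [Multiset.map_map, Function.comp_def, mul_pow, Multiset.sum_map_mul_right, norm_mul]
    gcongr
    exact Complex.norm_sum_mul_le_norm_sum_of_nonneg hnonneg fun k _ => by
      rw [norm_pow, hb, one_pow]
  -- The Cesàro means in `hle` tend to the multiplicities of `z₀` and of `ρ` in `R`.
  have hcount := le_of_tendsto_of_tendsto'
    ((a.map (· * b)).tendsto_inv_mul_sum_range_sum_pow hab).norm
    (a.tendsto_inv_mul_sum_range_sum_pow ha).norm hle
  simp only [Complex.norm_natCast, Nat.cast_le] at hcount
  have hz₀mult : 0 < (a.map (· * b)).count 1 := by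
    refine Multiset.count_pos.mpr (Multiset.mem_map.mpr ⟨z₀ / ρ, Multiset.mem_map_of_mem _ hz₀, ?_⟩)
    rw [div_mul_div_comm, Complex.mul_conj, Complex.normSq_eq_norm_sq]
    push_cast
    rw [← sq]
    exact div_self (pow_ne_zero 2 hρ0)
  obtain ⟨z, hz, hzρ⟩ := Multiset.mem_map.mp (Multiset.count_pos.mp (hz₀mult.trans_le hcount))
  rwa [← (div_eq_one_iff_eq hρ0).mp hzρ]

end PowerSums

section JWitness

variable {ι : Type*} [DecidableEq ι]

def jSign (J : Finset ι) (i : ι) : ℝ := if i ∈ J then -1 else 1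

theorem jSign_mul_self (J : Finset ι) (i : ι) : jSign J i * jSign J i = 1 := by
  unfold jSign; split_ifs <;> norm_num

theorem jSign_mul_mul_jSign (J : Finset ι) (a : ℝ) (i j : ι) :
    jSign J i * a * jSign J j = if (i ∈ J ↔ j ∈ J) then a else -a := by
  unfold jSign; by_cases hi : i ∈ J <;> by_cases hj : j ∈ J <;> simp [hi, hj]

variable [Fintype ι]

theorem isJWitness_iff_jSign_mul_mul_jSign_nonneg {A : Matrix ι ι ℝ} {J : Finset ι} :
    IsJWitness A J ↔ ∀ i j, 0 ≤ jSign J i * A i j * jSign J j := by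
  simp only [jSign_mul_mul_jSign]
  refine ⟨fun hA i j => ?_, fun h => ⟨fun i j hx => ?_, fun i j hneg => ?_⟩⟩
  · split_ifs with hij
    · exact not_lt.mp fun hneg => (xor_iff_not_iff _ _).mp (hA.2 i j hneg) hij
    · exact neg_nonneg.mpr (hA.1 i j ((xor_iff_not_iff _ _).mpr hij))
  · simpa [(xor_iff_not_iff _ _).mp hx] using h i j
  · refine (xor_iff_not_iff _ _).mpr fun hij => ?_
    exact hneg.not_ge (by simpa [hij] using h i j)

theorem IsJWitness.mul {A B : Matrix ι ι ℝ} {J : Finset ι} (hA : IsJWitness A J)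
    (hB : IsJWitness B J) : IsJWitness (A * B) J := by
  rw [isJWitness_iff_jSign_mul_mul_jSign_nonneg] at *
  intro i j
  have hsplit : jSign J i * (A * B) i j * jSign J j
      = ∑ l, (jSign J i * A i l * jSign J l) * (jSign J l * B l j * jSign J j) := by
    simp only [Matrix.mul_apply, Finset.mul_sum, Finset.sum_mul]
    refine Finset.sum_congr rfl fun l _ => ?_
    linear_combination (jSign J i * A i l * B l j * jSign J j) * (jSign_mul_self J l).symm
  rw [hsplit]
  exact Finset.sum_nonneg fun l _ => mul_nonneg (hA i l) (hB l j)

theorem isJWitness_one (J : Finset ι) : IsJWitness (1 : Matrix ι ι ℝ) J := by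
  rw [isJWitness_iff_jSign_mul_mul_jSign_nonneg]
  intro i j
  by_cases h : i = j
  · subst h
    rw [Matrix.one_apply_eq, mul_one, jSign_mul_self]
    exact zero_le_one
  · simp [Matrix.one_apply_ne h]

theorem IsJWitness.pow {A : Matrix ι ι ℝ} {J : Finset ι} (hA : IsJWitness A J) (k : ℕ) :
    IsJWitness (A ^ k) J := by
  induction k with
  | zero => exact isJWitness_one J
  | succ k ih => rw [pow_succ]; exact ih.mul hA

theorem IsJWitness.diag_nonneg {A : Matrix ι ι ℝ} {J : Finset ι} (hA : IsJWitness A J) (i : ι) :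
    0 ≤ A i i :=
  not_lt.mp fun h => (xor_iff_not_iff _ _).mp (hA.2 i i h) Iff.rfl

theorem IsJWitness.trace_nonneg {A : Matrix ι ι ℝ} {J : Finset ι} (hA : IsJWitness A J) :
    0 ≤ A.trace :=
  Finset.sum_nonneg fun i _ => hA.diag_nonneg i

theorem IsJWitness.trace_pos {A : Matrix ι ι ℝ} {J : Finset ι} (hA : IsJWitness A J) {i : ι}
    (hi : A i i ≠ 0) : 0 < A.trace :=
  ((hA.diag_nonneg i).lt_of_ne' hi).trans_le
    (Finset.single_le_sum (fun j _ => hA.diag_nonneg j) (Finset.mem_univ i))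

end JWitness

section Spectrum

variable {ι : Type*} [Fintype ι] [DecidableEq ι]

theorem sum_map_pow_specM (A : Matrix ι ι ℝ) (k : ℕ) :
    ((specM A).map (· ^ k)).sum = ((A ^ k).trace : ℂ) := by
  have h := AddMonoidHom.map_trace Complex.ofRealHom (A ^ k)
  rw [Matrix.map_pow] at h
  rw [specM, ← Matrix.trace_pow_eq_sum_roots_charpoly_pow]
  exact h.symm

open scoped ComplexOrder in
theorem IsJWitness.sum_map_pow_specM_nonneg {A : Matrix ι ι ℝ} {J : Finset ι}
    (hA : IsJWitness A J) (k : ℕ) : 0 ≤ ((specM A).map (· ^ k)).sum := by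
  rw [sum_map_pow_specM]
  exact Complex.zero_le_real.mpr (hA.pow k).trace_nonneg

theorem exists_mem_specM_specRad_eq_norm [Nonempty ι] (A : Matrix ι ι ℝ) :
    ∃ z₀ ∈ specM A, specRad A = ‖z₀‖ ∧ ∀ z ∈ specM A, ‖z‖ ≤ ‖z₀‖ := by
  have hne : (specM A).toFinset.Nonempty := by
    rw [Multiset.toFinset_nonempty, ← Multiset.card_pos, specM,
      IsAlgClosed.card_roots_eq_natDegree, Matrix.charpoly_natDegree_eq_dim]
    exact Fintype.card_pos
  obtain ⟨z₀, hz₀, hmax⟩ := (specM A).toFinset.exists_max_image (‖·‖) hne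
  simp only [Multiset.mem_toFinset] at hz₀ hmax
  refine ⟨z₀, hz₀, IsGreatest.csSup_eq ⟨⟨z₀, hz₀, rfl⟩, ?_⟩, hmax⟩
  rintro _ ⟨z, hz, rfl⟩
  exact hmax z hz

theorem specRad_pos_of_trace_ne_zero (A : Matrix ι ι ℝ) (h : A.trace ≠ 0) : 0 < specRad A := by
  have : Nonempty ι := by
    by_contra hι
    rw [not_nonempty_iff] at hι
    exact h (by simp [Matrix.trace])
  obtain ⟨z₀, -, hρ, hmax⟩ := exists_mem_specM_specRad_eq_norm A
  rw [hρ, norm_pos_iff]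
  rintro rfl
  have hsum : ((specM A).map (· ^ 1)).sum = 0 := Multiset.sum_eq_zero fun w hw => by
    obtain ⟨z, hz, rfl⟩ := Multiset.mem_map.mp hw
    simpa using hmax z hz
  rw [sum_map_pow_specM, pow_one, Complex.ofReal_eq_zero] at hsum
  exact h hsum

end Spectrum

/-- a `J`-sign-symmetric matrix with a nonzero diagonal entry has a
strictly positive spectral radius which is an eigenvalue. -/
theorem stmt3 {n : ℕ} (A : Matrix (Fin n) (Fin n) ℝ) (hA : JSignSym A)
    (hdiag : ∃ i, A i i ≠ 0) :
    0 < specRad A ∧ ((specRad A : ℂ) ∈ specM A) := by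
  obtain ⟨J, hJ⟩ := hA
  obtain ⟨i, hi⟩ := hdiag
  have : Nonempty (Fin n) := ⟨i⟩
  obtain ⟨z₀, hz₀, hρ, hmax⟩ := exists_mem_specM_specRad_eq_norm A
  refine ⟨specRad_pos_of_trace_ne_zero A (hJ.trace_pos hi).ne', ?_⟩
  rw [hρ]
  exact (specM A).ofReal_norm_mem_of_sum_pow_nonneg hJ.sum_map_pow_specM_nonneg hz₀ hmax
end

section
/- Let A be an n×n real matrix that is J-sign-symmetric and irreducible. Then the witness set J in the definition of J-sign-symmetricity is unique up to complement: if J₁ and J₂ are both subsets of {1,…,n} satisfying conditions (a) and (b) of the definition for A, then J₂ = J₁ or J₂ = {1,…,n}∖J₁. -/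
/-! For a nonzero entry `A i j`, its sign alone decides whether `i` and `j` lie on the same side
of a witness `J`. Hence for two witnesses `J₁`, `J₂` the set of indices on which they agree is
closed under the nonzero pattern of `A`, and by irreducibility it is empty or everything. -/

open Matrix Complex Finset

section

variable {ι : Type*} [Fintype ι] [DecidableEq ι] {A : Matrix ι ι ℝ}

theorem IsJWitness.xor_iff_neg {J : Finset ι} (hJ : IsJWitness A J) {i j : ι} (hij : A i j ≠ 0) :
    Xor (i ∈ J) (j ∈ J) ↔ A i j < 0 :=
  ⟨fun hx => (hJ.1 i j hx).lt_of_ne hij, hJ.2 i j⟩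

theorem IsIrredMat.eq_empty_or_eq_univ (hA : IsIrredMat A) {S : Finset ι}
    (hS : ∀ i ∈ S, ∀ j, A i j ≠ 0 → j ∈ S) : S = ∅ ∨ S = univ := by
  by_contra! h
  exact hA ⟨S, h.1, h.2, fun i hi j hj => not_not.1 fun hij => hj (hS i hi j hij)⟩

end

/-- for an irreducible `J`-sign-symmetric matrix the witness set `J` is unique
up to complement. -/
theorem stmt7 {n : ℕ} (A : Matrix (Fin n) (Fin n) ℝ) (hirr : IsIrredMat A)
    (J₁ J₂ : Finset (Fin n)) (h₁ : IsJWitness A J₁) (h₂ : IsJWitness A J₂) :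
    J₂ = J₁ ∨ J₂ = J₁ᶜ := by
  set S : Finset (Fin n) := univ.filter fun i => (i ∈ J₁ ↔ i ∈ J₂) with hS
  have hclosed : ∀ i ∈ S, ∀ j, A i j ≠ 0 → j ∈ S := by
    intro i hi j hij
    have hxor := (h₁.xor_iff_neg hij).trans (h₂.xor_iff_neg hij).symm
    simp only [hS, mem_filter, mem_univ, true_and, xor_iff_not_iff] at hi hxor ⊢
    tauto
  rcases hirr.eq_empty_or_eq_univ hclosed with hempty | huniv
  · right
    ext i
    have : i ∉ S := hempty ▸ notMem_empty i
    simp only [hS, mem_filter, mem_univ, true_and, mem_compl] at this ⊢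
    tauto
  · left
    ext i
    have : i ∈ S := huniv ▸ mem_univ i
    simp only [hS, mem_filter, mem_univ, true_and] at this
    exact this.symm
end

section
/- Let n ≥ 2, let W ⊆ {1,…,n}×{1,…,n} satisfy conditions (1) and (2), and let A be an n×n real matrix with complex eigenvalues λ₁,…,λₙ listed according to algebraic multiplicity. Then the multiset of complex eigenvalues of the W-matrix A_W^{(2)} (listed according to algebraic multiplicity) is exactly the multiset of all products λ_i λ_j with 1 ≤ i < j ≤ n. -/
open Matrix Complex Finset

/-!
Over `ℂ`, `A` is similar to a matrix `T` that is triangular for some ordering of the indices.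
The second compound is multiplicative, so `A^{(2)}` is similar to `T^{(2)}`, and `T^{(2)}` is
triangular for the lexicographic order on sorted pairs of positions, with diagonal entries
`t_ii t_jj`. Hence the eigenvalues of `A^{(2)}` are the products of the 2-element submultisets of
the spectrum of `A`. The `W`-matrix is `A^{(2)}` with the pairs of `W ∖ Δ` sorted and the rows and
columns of the swapped pairs negated: a reindexing of `A^{(2)}` conjugated by a diagonal `±1`
matrix, so it has the same characteristic polynomial.
-/

open Polynomial Function

abbrev StrictPairs (ι : Type*) [LT ι] := {p : ι × ι // p.1 < p.2}

theorem Polynomial.roots_finset_prod_X_sub_C {R κ : Type*} [CommRing R] [IsDomain R]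
    (s : Finset κ) (f : κ → R) : (∏ i ∈ s, (X - C (f i))).roots = s.val.map f := by
  rw [Finset.prod_eq_multiset_prod, ← roots_multiset_prod_X_sub_C (s.val.map f), Multiset.map_map]
  rfl

section StrictPairs

variable {ι : Type*} [Fintype ι] [LinearOrder ι]

theorem Fintype.sum_sum_mul_alternating_eq_sum_strictPairs {R : Type*} [CommRing R]
    (g f : ι → ι → R) (hf_diag : ∀ s, f s s = 0) (hf_swap : ∀ s t, f t s = -f s t) :
    ∑ s, ∑ t, g s t * f s t =
      ∑ p : StrictPairs ι, (g p.1.1 p.1.2 - g p.1.2 p.1.1) * f p.1.1 p.1.2 := by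
  have hsplit : ∀ s t, g s t * f s t =
      (if s < t then g s t * f s t else 0) + (if t < s then g s t * f s t else 0) := by
    intro s t
    rcases lt_trichotomy s t with h | rfl | h
    · simp [h, h.not_gt]
    · simp [hf_diag]
    · simp [h, h.not_gt]
  rw [Finset.sum_congr rfl fun s _ => Finset.sum_congr rfl fun t _ => hsplit s t]
  simp only [Finset.sum_add_distrib]
  rw [Finset.sum_comm (f := fun s t => if t < s then g s t * f s t else 0),
    ← Finset.sum_subtype (Finset.univ.filter fun p : ι × ι => p.1 < p.2) (by simp)
      (fun p => (g p.1 p.2 - g p.2 p.1) * f p.1 p.2),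
    Finset.sum_filter, Fintype.sum_prod_type, ← Finset.sum_add_distrib]
  refine Finset.sum_congr rfl fun s _ => ?_
  rw [← Finset.sum_add_distrib]
  refine Finset.sum_congr rfl fun t _ => ?_
  split_ifs
  · rw [hf_swap]; ring
  · simp

theorem map_filter_lt_mul_eq_powersetCard {M : Type*} [CommMonoid M] (f : ι → M) :
    (Finset.univ.filter fun p : ι × ι => p.1 < p.2).val.map (fun p => f p.1 * f p.2) =
      ((Finset.univ.val.map f).powersetCard 2).map Multiset.prod := by
  rw [Multiset.powersetCard_map, Multiset.map_map, ← Finset.map_val_val_powersetCard,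
    Multiset.map_map]
  refine Multiset.map_eq_map_of_bij_of_nodup _ _ (Finset.nodup _) (Finset.nodup _)
    (fun p _ => {p.1, p.2}) (fun p hp => ?_) (fun p hp q hq hpq => ?_) (fun t ht => ?_)
    (fun p hp => ?_)
  all_goals simp only [Finset.mem_val, Finset.mem_filter, Finset.mem_univ, true_and] at *
  · simp [Finset.mem_powersetCard, Finset.card_pair hp.ne]
  · have hpq' := congrArg ((↑) : Finset ι → Set ι) hpq
    simp only [Finset.coe_insert, Finset.coe_singleton, Set.pair_eq_pair_iff] at hpq'
    rcases hpq' with ⟨h₁, h₂⟩ | ⟨h₁, h₂⟩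
    · exact Prod.ext h₁ h₂
    · refine absurd hp (not_lt.2 (le_of_lt ?_))
      rwa [h₁, h₂]
  · obtain ⟨x, y, hxy, rfl⟩ := Finset.card_eq_two.1 (Finset.mem_powersetCard.1 ht).2
    rcases hxy.lt_or_gt with h | h
    · exact ⟨(x, y), h, rfl⟩
    · exact ⟨(y, x), h, Finset.pair_comm y x⟩
  · rw [Function.comp_apply, Function.comp_apply, ← Finset.prod_eq_multiset_prod,
      Finset.prod_pair hp.ne]

end StrictPairs

namespace Matrix

section Compound

variable {ι R : Type*} [LinearOrder ι] [CommRing R]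

def secondCompound (M : Matrix ι ι R) : Matrix (StrictPairs ι) (StrictPairs ι) R :=
  of fun p q => M p.1.1 q.1.1 * M p.1.2 q.1.2 - M p.1.1 q.1.2 * M p.1.2 q.1.1

@[simp]
theorem secondCompound_apply (M : Matrix ι ι R) (p q : StrictPairs ι) :
    secondCompound M p q = M p.1.1 q.1.1 * M p.1.2 q.1.2 - M p.1.1 q.1.2 * M p.1.2 q.1.1 :=
  rfl

theorem secondCompound_one : secondCompound (1 : Matrix ι ι R) = 1 := by
  ext ⟨⟨i, j⟩, hij⟩ ⟨⟨k, l⟩, hkl⟩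
  have : ¬ (i = l ∧ j = k) := fun ⟨hil, hjk⟩ => (hij.trans (hjk ▸ hil ▸ hkl)).false
  simp only [secondCompound_apply, one_apply, Subtype.mk.injEq, Prod.mk.injEq]
  split_ifs <;> simp_all

theorem secondCompound_mul [Fintype ι] (M N : Matrix ι ι R) :
    secondCompound (M * N) = secondCompound M * secondCompound N := by
  ext ⟨⟨i, j⟩, hij⟩ ⟨⟨k, l⟩, hkl⟩
  have expand : secondCompound (M * N) ⟨(i, j), hij⟩ ⟨(k, l), hkl⟩ =
      ∑ s, ∑ t, M i s * M j t * (N s k * N t l - N s l * N t k) := by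
    simp only [secondCompound_apply, mul_apply, Finset.sum_mul_sum, ← Finset.sum_sub_distrib]
    exact Finset.sum_congr rfl fun s _ => Finset.sum_congr rfl fun t _ => by ring
  rw [expand, Fintype.sum_sum_mul_alternating_eq_sum_strictPairs _ _ (fun s => by ring)
    (fun s t => by ring), mul_apply]
  rfl

def secondCompoundHom [Fintype ι] :
    Matrix ι ι R →* Matrix (StrictPairs ι) (StrictPairs ι) R where
  toFun := secondCompound
  map_one' := secondCompound_one
  map_mul' := secondCompound_mul

def pairWeight {α : Type*} [LinearOrder α] (b : ι → α) (p : StrictPairs ι) : α ×ₗ α :=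
  toLex (min (b p.1.1) (b p.1.2), max (b p.1.1) (b p.1.2))

theorem BlockTriangular.secondCompound {α : Type*} [LinearOrder α] {M : Matrix ι ι R}
    {b : ι → α} (h : M.BlockTriangular b) :
    M.secondCompound.BlockTriangular (pairWeight b) := by
  rintro ⟨⟨i, j⟩, hij⟩ ⟨⟨k, l⟩, hkl⟩ hlt
  have vanish : ∀ k' l', min (b k') (b l') = min (b k) (b l) →
      max (b k') (b l') = max (b k) (b l) → M i k' * M j l' = 0 := by
    intro k' l' hmin hmax
    by_cases hik : b k' < b i
    · rw [h hik, zero_mul]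
    by_cases hjl : b l' < b j
    · rw [h hjl, mul_zero]
    rw [pairWeight, pairWeight, ← hmin, ← hmax] at hlt
    exact absurd hlt (not_lt.2 (Prod.Lex.toLex_mono
      ⟨min_le_min (not_lt.1 hik) (not_lt.1 hjl), max_le_max (not_lt.1 hik) (not_lt.1 hjl)⟩))
  simp only [secondCompound_apply, vanish k l rfl rfl, vanish l k (min_comm _ _) (max_comm _ _),
    sub_zero]

theorem injective_pairWeight {α : Type*} [LinearOrder α] {b : ι → α} (hb : Injective b) :
    Injective (pairWeight b) := by
  rintro ⟨⟨i, j⟩, hij⟩ ⟨⟨k, l⟩, hkl⟩ he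
  obtain ⟨hmin, hmax⟩ := Prod.mk.inj (toLex.injective he)
  have : (b i = b k ∧ b j = b l) ∨ (b i = b l ∧ b j = b k) := by
    rcases le_total (b i) (b j) with h1 | h1 <;> rcases le_total (b k) (b l) with h2 | h2 <;>
      simp_all
  rcases this with ⟨hik, hjl⟩ | ⟨hil, hjk⟩
  · obtain rfl := hb hik
    obtain rfl := hb hjl
    rfl
  · obtain rfl := hb hil
    obtain rfl := hb hjk
    exact (lt_asymm hij hkl).elim

theorem BlockTriangular.secondCompound_apply_self {R α : Type*} [CommRing R] [LinearOrder α]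
    {T : Matrix ι ι R} {b : ι → α} (hT : T.BlockTriangular b) (hb : Injective b)
    (p : StrictPairs ι) : T.secondCompound p p = T p.1.1 p.1.1 * T p.1.2 p.1.2 := by
  have : T p.1.1 p.1.2 * T p.1.2 p.1.1 = 0 := by
    rcases lt_or_gt_of_ne (hb.ne p.2.ne) with h | h
    · rw [hT h, mul_zero]
    · rw [hT h, zero_mul]
  rw [secondCompound_apply, this, sub_zero]

end Compound

section Triangular

variable {ι R : Type*} [Fintype ι] [DecidableEq ι] [CommRing R]

theorem BlockTriangular.det_of_injective {α : Type*} [LinearOrder α] {M : Matrix ι ι R}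
    {b : ι → α} (h : M.BlockTriangular b) (hb : Injective b) : M.det = ∏ i, M i i := by
  classical
  rw [h.det, Finset.prod_image hb.injOn]
  refine Finset.prod_congr rfl fun i _ => ?_
  let : Unique {j // b j = b i} := ⟨⟨⟨i, rfl⟩⟩, fun j => Subtype.ext (hb j.2)⟩
  rw [det_unique]
  rfl

theorem BlockTriangular.charpoly_of_injective {α : Type*} [LinearOrder α] {M : Matrix ι ι R}
    {b : ι → α} (h : M.BlockTriangular b) (hb : Injective b) :
    M.charpoly = ∏ i, (X - C (M i i)) := by
  rw [Matrix.charpoly, h.charmatrix.det_of_injective hb]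
  simp only [charmatrix_apply_eq]

/-- `P⁻¹ * B * P = T` is triangular for the order on `ι` pulled back along the injective `b`. -/
def IsTriangularizable (B : Matrix ι ι R) : Prop :=
  ∃ (P T : Matrix ι ι R) (b : ι → ℕ),
    IsUnit P ∧ Injective b ∧ T.BlockTriangular b ∧ B * P = P * T

theorem IsTriangularizable.reindex {κ : Type*} [Fintype κ] [DecidableEq κ] {B : Matrix ι ι R}
    (e : ι ≃ κ) (h : B.IsTriangularizable) : (Matrix.reindex e e B).IsTriangularizable := by
  obtain ⟨P, T, b, hP, hb, hT, hBP⟩ := h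
  refine ⟨Matrix.reindex e e P, Matrix.reindex e e T, b ∘ e.symm, ?_, hb.comp e.symm.injective,
    ?_, ?_⟩
  · rwa [isUnit_iff_isUnit_det, det_reindex_self, ← isUnit_iff_isUnit_det]
  · rwa [blockTriangular_reindex_iff, Function.comp_assoc, e.symm_comp_self, Function.comp_id]
  · simp only [reindex_apply, submatrix_mul_equiv, hBP]

theorem IsTriangularizable.of_mul_eq_mul {B C P : Matrix ι ι R} (hP : IsUnit P)
    (hBC : B * P = P * C) (hC : C.IsTriangularizable) : B.IsTriangularizable := by
  obtain ⟨Q, T, b, hQ, hb, hT, hCQ⟩ := hC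
  exact ⟨P * Q, T, b, hP.mul hQ, hb, hT, by rw [← mul_assoc, hBC, mul_assoc, hCQ, mul_assoc]⟩

theorem IsTriangularizable.fromBlocks {m : Type*} [Fintype m] [DecidableEq m] [Subsingleton m]
    (A : Matrix m m R) (r : Matrix m ι R) {D : Matrix ι ι R} (hD : D.IsTriangularizable) :
    (Matrix.fromBlocks A r 0 D).IsTriangularizable := by
  obtain ⟨Q, T, b, hQ, hb, hT, hDQ⟩ := hD
  refine ⟨Matrix.fromBlocks 1 0 0 Q, Matrix.fromBlocks A (r * Q) 0 T,
    Sum.elim (fun _ => 0) (fun j => b j + 1), ?_, ?_, ?_, ?_⟩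
  · rw [isUnit_iff_isUnit_det, det_fromBlocks_zero₂₁, det_one, one_mul]
    exact (isUnit_iff_isUnit_det Q).1 hQ
  · rintro (i | i) (j | j) h
    · exact congrArg Sum.inl (Subsingleton.elim i j)
    · simp at h
    · simp at h
    · simpa using hb (by simpa using h)
  · rintro (i | i) (j | j) h
    · simp at h
    · simp at h
    · rfl
    · exact hT (by simpa using h)
  · simp [fromBlocks_multiply, hDQ]

theorem IsTriangularizable.of_col_eq_zero {C : Matrix ι ι R} {i₀ : ι}
    (hC : ∀ i ≠ i₀, C i i₀ = 0)
    (hD : (C.submatrix ((↑) : {i // i ≠ i₀} → ι) (↑)).IsTriangularizable) :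
    C.IsTriangularizable := by
  let e := Equiv.sumCompl (· = i₀)
  have hblocks : Matrix.reindex e.symm e.symm C =
      Matrix.fromBlocks (C.submatrix ((↑) : {i // i = i₀} → ι) (↑)) (C.submatrix (↑) (↑))
        0 (C.submatrix ((↑) : {i // i ≠ i₀} → ι) (↑)) := by
    ext (i | i) (j | j)
    · rfl
    · rfl
    · simpa [e, j.2] using hC i i.2
    · rfl
  suffices (Matrix.reindex e.symm e.symm C).IsTriangularizable by simpa using this.reindex e
  rw [hblocks]
  exact hD.fromBlocks _ _

variable {K : Type*} [Field K] [IsAlgClosed K]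

theorem exists_mul_eq_mul_and_col_eq_zero [Nonempty ι] (B : Matrix ι ι K) :
    ∃ (i₀ : ι) (P C : Matrix ι ι K),
      IsUnit P ∧ B * P = P * C ∧ ∀ i ≠ i₀, C i i₀ = 0 := by
  obtain ⟨μ, hμ⟩ := Module.End.exists_eigenvalue (toLin' B)
  obtain ⟨v, hv⟩ := hμ.exists_hasEigenvector
  obtain ⟨i₀, hvi₀⟩ : ∃ i, v i ≠ 0 := Function.ne_iff.1 hv.2
  set P := (1 : Matrix ι ι K).updateCol i₀ v
  have hPdet : IsUnit P.det := by
    rw [← cramer_apply, cramer_one]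
    exact hvi₀.isUnit
  have hPe : P *ᵥ Pi.single i₀ 1 = v := by
    ext i
    simp [P, mulVec_single]
  have hBv : B *ᵥ v = μ • v := by
    rw [← toLin'_apply]
    exact hv.apply_eq_smul
  have hCe : (P⁻¹ * B * P) *ᵥ Pi.single i₀ 1 = μ • Pi.single i₀ 1 := by
    rw [← mulVec_mulVec, hPe, ← mulVec_mulVec, hBv, mulVec_smul, ← hPe, mulVec_mulVec,
      nonsing_inv_mul _ hPdet, one_mulVec]
  refine ⟨i₀, P, P⁻¹ * B * P, (isUnit_iff_isUnit_det P).2 hPdet, ?_, fun i hi => ?_⟩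
  · simp only [← mul_assoc, mul_nonsing_inv _ hPdet, one_mul]
  · simpa [mulVec_single, hi] using congrFun hCe i

theorem isTriangularizable (B : Matrix ι ι K) : B.IsTriangularizable := by
  induction h : Fintype.card ι using Nat.strong_induction_on generalizing ι with
  | _ n ih =>
  cases isEmpty_or_nonempty ι
  · exact ⟨1, B, fun _ => 0, isUnit_one, injective_of_subsingleton _, fun i => isEmptyElim i,
      by rw [mul_one, one_mul]⟩
  obtain ⟨i₀, P, C, hP, hBC, hC⟩ := exists_mul_eq_mul_and_col_eq_zero B
  refine .of_mul_eq_mul hP hBC (.of_col_eq_zero hC (ih _ ?_ _ rfl))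
  exact h ▸ Fintype.card_subtype_lt (p := (· ≠ i₀)) (x := i₀) (by simp)

theorem charpoly_eq_of_mul_eq_mul {B P T : Matrix ι ι R} (hP : IsUnit P) (h : B * P = P * T) :
    B.charpoly = T.charpoly := by
  have hdet := (isUnit_iff_isUnit_det P).1 hP
  rw [← mul_nonsing_inv_cancel_right P B hdet, h, charpoly_mul_comm,
    nonsing_inv_mul_cancel_left P T hdet]

end Triangular

section Spectrum

variable {ι : Type*} [Fintype ι] [LinearOrder ι]

variable {K : Type*} [Field K] [IsAlgClosed K]

theorem roots_charpoly_secondCompound (B : Matrix ι ι K) :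
    B.secondCompound.charpoly.roots = (B.charpoly.roots.powersetCard 2).map Multiset.prod := by
  obtain ⟨P, T, b, hP, hb, hT, hBP⟩ := isTriangularizable B
  have hBP₂ : secondCompound B * secondCompound P = secondCompound P * secondCompound T := by
    rw [← secondCompound_mul, hBP, secondCompound_mul]
  rw [charpoly_eq_of_mul_eq_mul (hP.map secondCompoundHom) hBP₂, charpoly_eq_of_mul_eq_mul hP hBP,
    hT.secondCompound.charpoly_of_injective (injective_pairWeight hb),
    hT.charpoly_of_injective hb]
  simp only [hT.secondCompound_apply_self hb]
  rw [← Finset.prod_subtype (Finset.univ.filter fun p : ι × ι => p.1 < p.2) (by simp)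
      (fun p => X - C (T p.1 p.1 * T p.2 p.2)),
    roots_finset_prod_X_sub_C, roots_finset_prod_X_sub_C]
  exact map_filter_lt_mul_eq_powersetCard (fun i => T i i)

end Spectrum

end Matrix

section WMatrix

variable {n : ℕ} {W : Finset (Fin n × Fin n)}

def sortPair (r : WIdx W) : Idx2 n :=
  if h : r.1.1 < r.1.2 then ⟨r.1, h⟩ else ⟨r.1.swap, lt_of_le_of_ne (not_lt.1 h) r.2.2.symm⟩

def pairSign {R : Type*} [Ring R] (r : WIdx W) : R :=
  if r.1.1 < r.1.2 then 1 else -1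

theorem sortPair_bijective (hW : WCond W) : Bijective (sortPair (W := W)) := by
  constructor
  · rintro ⟨p, hpW, hp⟩ ⟨q, hqW, hq⟩ h
    simp only [sortPair] at h
    split_ifs at h <;> rw [Subtype.mk.injEq] at h
    · exact Subtype.ext h
    · exact absurd ((hW.2 p).1 ⟨hpW, by rwa [h, Prod.swap_swap]⟩) hp
    · exact absurd ((hW.2 q).1 ⟨hqW, by rwa [← h, Prod.swap_swap]⟩) hq
    · exact Subtype.ext (Prod.swap_injective h)
  · rintro ⟨p, hp⟩
    rcases hW.1 p with hpW | hpW
    · exact ⟨⟨p, hpW, hp.ne⟩, dif_pos hp⟩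
    · exact ⟨⟨p.swap, hpW, hp.ne'⟩, by simp [sortPair, hp.not_gt]⟩

theorem Wmatrix_map_ofReal (A : Matrix (Fin n) (Fin n) ℝ) :
    (Wmatrix A W).map ofReal = diagonal pairSign *
      ((A.map ofReal).secondCompound.submatrix sortPair sortPair) * diagonal pairSign := by
  ext ⟨⟨i, j⟩, hijW, hij⟩ ⟨⟨k, l⟩, hklW, hkl⟩
  rw [mul_diagonal, diagonal_mul]
  simp only [map_apply, Wmatrix, submatrix_apply, sortPair, pairSign]
  split_ifs <;> simp <;> ring

theorem charpoly_Wmatrix_map_ofReal (hW : WCond W) (A : Matrix (Fin n) (Fin n) ℝ) :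
    ((Wmatrix A W).map ofReal).charpoly = (A.map ofReal).secondCompound.charpoly := by
  set S : Matrix (WIdx W) (WIdx W) ℂ := diagonal pairSign
  set M : Matrix (WIdx W) (WIdx W) ℂ := (A.map ofReal).secondCompound.submatrix sortPair sortPair
  have hS : S * S = 1 := by
    rw [diagonal_mul_diagonal, ← diagonal_one]
    congr 1
    funext r
    unfold pairSign
    split_ifs <;> norm_num
  have hconj : S * M * S * S = S * M := by rw [mul_assoc _ S, hS, mul_one]
  let e := Equiv.ofBijective _ (sortPair_bijective hW)
  rw [Wmatrix_map_ofReal, charpoly_eq_of_mul_eq_mul ⟨⟨S, S, hS, hS⟩, rfl⟩ hconj,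
    ← charpoly_reindex e.symm, reindex_apply, Equiv.symm_symm]
  rfl

end WMatrix

theorem stmt9_general {n : ℕ} (W : Finset (Fin n × Fin n)) (hW : WCond W)
    (A : Matrix (Fin n) (Fin n) ℝ) (lam : Fin n → ℂ)
    (hl : specM A = Multiset.map lam Finset.univ.val) :
    specM (Wmatrix A W) =
      Multiset.map (fun p : Fin n × Fin n => lam p.1 * lam p.2)
        (Finset.univ.filter (fun p : Fin n × Fin n => p.1 < p.2)).val := by
  rw [map_filter_lt_mul_eq_powersetCard, ← hl, specM, specM,
    charpoly_Wmatrix_map_ofReal hW, Matrix.roots_charpoly_secondCompound]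

/-- the eigenvalues of the `W`-matrix `A_W^{(2)}` (with multiplicity) are
exactly the products `λᵢ λⱼ`, `1 ≤ i < j ≤ n`, of the eigenvalues of `A`. -/
theorem stmt9 {n : ℕ} (hn : 2 ≤ n) (W : Finset (Fin n × Fin n)) (hW : WCond W)
    (A : Matrix (Fin n) (Fin n) ℝ) (lam : Fin n → ℂ)
    (hl : specM A = Multiset.map lam Finset.univ.val) :
    specM (Wmatrix A W) =
      Multiset.map (fun p : Fin n × Fin n => lam p.1 * lam p.2)
        (Finset.univ.filter (fun p : Fin n × Fin n => p.1 < p.2)).val :=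
  stmt9_general W hW A lam hl
end

section
/- Let A be an n×n real matrix (n ≥ 2) whose second compound matrix A^{(2)} is J-sign-symmetric. Then there exists a set W ⊆ {1,…,n}×{1,…,n} satisfying conditions (1) and (2) such that the corresponding W-matrix A_W^{(2)} is entrywise nonnegative. Moreover, if A^{(2)} is irreducible, then A_W^{(2)} is also irreducible. -/
open Matrix Complex Finset

/-!
A witness `J̃` for `A^{(2)}` gives the signature `D = diag(±1)` with `D A^{(2)} D ≥ 0`.
Swapping `(i,j)` to `(j,i)` changes the sign of the corresponding row or column of minors, so
orienting every pair of `J̃` backwards and every other pair forwards yields a set `W` whose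
`W`-matrix is exactly `D A^{(2)} D`, reindexed. A diagonal `±1` scaling keeps the zero pattern,
hence irreducibility.
-/

def signOf {ι : Type*} [DecidableEq ι] (J : Finset ι) (i : ι) : ℝ := if i ∈ J then -1 else 1

lemma signOf_ne_zero {ι : Type*} [DecidableEq ι] (J : Finset ι) (i : ι) : signOf J i ≠ 0 := by
  unfold signOf; split_ifs <;> norm_num

lemma IsJWitness.signOf_mul_signOf_mul_nonneg {ι : Type*} [Fintype ι] [DecidableEq ι]
    {A : Matrix ι ι ℝ} {J : Finset ι} (hJ : IsJWitness A J) (i j : ι) :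
    0 ≤ signOf J i * signOf J j * A i j := by
  obtain ⟨hle, hneg⟩ := hJ
  have hnonneg (h : ¬Xor' (i ∈ J) (j ∈ J)) : 0 ≤ A i j := le_of_not_gt (mt (hneg i j) h)
  by_cases hi : i ∈ J <;> by_cases hj : j ∈ J <;> simp only [signOf, hi, hj, if_true, if_false]
  · simpa using hnonneg (by simp [Xor', hi, hj])
  · simpa using hle i j (by simp [Xor', hi, hj])
  · simpa using hle i j (by simp [Xor', hi, hj])
  · simpa using hnonneg (by simp [Xor', hi, hj])

lemma IsReducibleMat.of_equiv {ι κ : Type*} [Fintype ι] [DecidableEq ι] [Fintype κ]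
    [DecidableEq κ] {A : Matrix ι ι ℝ} {B : Matrix κ κ ℝ} (e : ι ≃ κ)
    (hzero : ∀ i j, B (e i) (e j) = 0 → A i j = 0) (hB : IsReducibleMat B) :
    IsReducibleMat A := by
  obtain ⟨S, hSne, hSuniv, hS⟩ := hB
  have hmem : ∀ i, i ∈ S.map e.symm.toEmbedding ↔ e i ∈ S := fun i => by
    simp [Finset.mem_map_equiv]
  refine ⟨S.map e.symm.toEmbedding, hSne.map, fun huniv => hSuniv ?_, fun i hi j hj => ?_⟩
  · refine Finset.eq_univ_iff_forall.2 fun k => ?_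
    simpa using (hmem (e.symm k)).1 (huniv ▸ Finset.mem_univ _)
  · exact hzero i j (hS _ ((hmem i).1 hi) _ (mt (hmem j).2 hj))

def minor2 {ι R : Type*} [CommRing R] (A : Matrix ι ι R) (p q : ι × ι) : R :=
  A p.1 q.1 * A p.2 q.2 - A p.1 q.2 * A p.2 q.1

lemma minor2_swap_left {ι R : Type*} [CommRing R] (A : Matrix ι ι R) (p q : ι × ι) :
    minor2 A p.swap q = -minor2 A p q := by
  simp only [minor2, Prod.fst_swap, Prod.snd_swap]; ring

lemma minor2_swap_right {ι R : Type*} [CommRing R] (A : Matrix ι ι R) (p q : ι × ι) :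
    minor2 A p q.swap = -minor2 A p q := by
  simp only [minor2, Prod.fst_swap, Prod.snd_swap]; ring

section Orientation

variable {n : ℕ} (Jt : Finset (Idx2 n))

lemma Idx2.val_ne_swap (q r : Idx2 n) : q.1 ≠ r.1.swap := by
  have := q.2; have := r.2
  simp only [ne_eq, Prod.ext_iff, Prod.fst_swap, Prod.snd_swap]
  omega

def orientBy (q : Idx2 n) : Fin n × Fin n := if q ∈ Jt then q.1.swap else q.1

lemma orientBy_eq_or (q : Idx2 n) : orientBy Jt q = q.1 ∨ orientBy Jt q = q.1.swap := by
  unfold orientBy; split_ifs <;> simp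

lemma orientBy_fst_ne_snd (q : Idx2 n) : (orientBy Jt q).1 ≠ (orientBy Jt q).2 := by
  rcases orientBy_eq_or Jt q with h | h <;> rw [h]
  exacts [q.2.ne, q.2.ne']

lemma orientBy_injective : Function.Injective (orientBy Jt) := by
  intro q r h
  rcases orientBy_eq_or Jt q with hq | hq <;> rcases orientBy_eq_or Jt r with hr | hr <;>
    rw [hq, hr] at h
  · exact Subtype.ext h
  · exact absurd h (q.val_ne_swap r)
  · exact absurd h.symm (r.val_ne_swap q)
  · exact Subtype.ext (Prod.swap_injective h)

lemma orientBy_swap_ne (q r : Idx2 n) : (orientBy Jt q).swap ≠ orientBy Jt r := by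
  intro h
  unfold orientBy at h
  split_ifs at h <;> grind [q.val_ne_swap r, r.val_ne_swap q]

lemma exists_orientBy_eq {p : Fin n × Fin n} (hp : p.1 ≠ p.2) :
    ∃ q, orientBy Jt q = p ∨ orientBy Jt q = p.swap := by
  rcases hp.lt_or_gt with h | h
  · rcases orientBy_eq_or Jt ⟨p, h⟩ with e | e
    exacts [⟨_, Or.inl e⟩, ⟨_, Or.inr e⟩]
  · rcases orientBy_eq_or Jt ⟨p.swap, h⟩ with e | e
    exacts [⟨_, Or.inr e⟩, ⟨_, Or.inl e⟩]

lemma minor2_orientBy (A : Matrix (Fin n) (Fin n) ℝ) (q r : Idx2 n) :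
    minor2 A (orientBy Jt q) (orientBy Jt r) = signOf Jt q * signOf Jt r * minor2 A q.1 r.1 := by
  unfold orientBy signOf
  split_ifs <;> simp [minor2_swap_left, minor2_swap_right]

def orientedPairs : Finset (Fin n × Fin n) :=
  Finset.univ.filter (fun p => p.1 = p.2) ∪ Finset.univ.image (orientBy Jt)

lemma mem_orientedPairs {p : Fin n × Fin n} :
    p ∈ orientedPairs Jt ↔ p.1 = p.2 ∨ ∃ q, orientBy Jt q = p := by
  simp [orientedPairs]

lemma wCond_orientedPairs : WCond (orientedPairs Jt) := by
  refine ⟨fun p => ?_, fun p => ⟨fun ⟨hp, hps⟩ => ?_, fun h => ?_⟩⟩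
  · by_cases hp : p.1 = p.2
    · exact Or.inl ((mem_orientedPairs Jt).2 (Or.inl hp))
    · obtain ⟨q, hq | hq⟩ := exists_orientBy_eq Jt hp
      exacts [Or.inl ((mem_orientedPairs Jt).2 (Or.inr ⟨q, hq⟩)),
        Or.inr ((mem_orientedPairs Jt).2 (Or.inr ⟨q, hq⟩))]
  · by_contra hne
    obtain _ | ⟨q, rfl⟩ := (mem_orientedPairs Jt).1 hp
    · contradiction
    obtain h | ⟨r, hr⟩ := (mem_orientedPairs Jt).1 hps
    · exact hne h.symm
    · exact orientBy_swap_ne Jt q r hr.symm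
  · exact ⟨(mem_orientedPairs Jt).2 (Or.inl h), (mem_orientedPairs Jt).2 (Or.inl h.symm)⟩

lemma mem_orientedPairs_and_ne_iff {p : Fin n × Fin n} :
    p ∈ orientedPairs Jt ∧ p.1 ≠ p.2 ↔ p ∈ Set.range (orientBy Jt) := by
  constructor
  · rintro ⟨hp, hne⟩
    exact ((mem_orientedPairs Jt).1 hp).resolve_left hne
  · rintro ⟨q, rfl⟩
    exact ⟨(mem_orientedPairs Jt).2 (Or.inr ⟨q, rfl⟩), orientBy_fst_ne_snd Jt q⟩

noncomputable def orientEquiv : Idx2 n ≃ WIdx (orientedPairs Jt) :=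
  (Equiv.ofInjective _ (orientBy_injective Jt)).trans
    (Equiv.subtypeEquivRight fun _ => (mem_orientedPairs_and_ne_iff Jt).symm)

lemma Wmatrix_orientEquiv (A : Matrix (Fin n) (Fin n) ℝ) (q r : Idx2 n) :
    Wmatrix A (orientedPairs Jt) (orientEquiv Jt q) (orientEquiv Jt r) =
      signOf Jt q * signOf Jt r * compound2 A q r :=
  minor2_orientBy Jt A q r

end Orientation

theorem stmt10_general {n : ℕ} (A : Matrix (Fin n) (Fin n) ℝ)
    (hA2 : JSignSym (compound2 A)) :
    ∃ W : Finset (Fin n × Fin n), WCond W ∧ (∀ p q, 0 ≤ Wmatrix A W p q) ∧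
      (IsIrredMat (compound2 A) → IsIrredMat (Wmatrix A W)) := by
  obtain ⟨Jt, hJt⟩ := hA2
  refine ⟨orientedPairs Jt, wCond_orientedPairs Jt, fun p q => ?_, fun hirr hred => hirr ?_⟩
  · rw [← (orientEquiv Jt).apply_symm_apply p, ← (orientEquiv Jt).apply_symm_apply q,
      Wmatrix_orientEquiv]
    exact hJt.signOf_mul_signOf_mul_nonneg _ _
  · refine hred.of_equiv (orientEquiv Jt) fun q r h => ?_
    rw [Wmatrix_orientEquiv] at h
    simpa [signOf_ne_zero] using h

/-- if `A^{(2)}` is `J`-sign-symmetric then there is a set `W` satisfying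
conditions (1) and (2) with `A_W^{(2)}` entrywise nonnegative; irreducibility of `A^{(2)}`
moreover gives irreducibility of `A_W^{(2)}`. -/
theorem stmt10 {n : ℕ} (hn : 2 ≤ n) (A : Matrix (Fin n) (Fin n) ℝ)
    (hA2 : JSignSym (compound2 A)) :
    ∃ W : Finset (Fin n × Fin n), WCond W ∧ (∀ p q, 0 ≤ Wmatrix A W p q) ∧
      (IsIrredMat (compound2 A) → IsIrredMat (Wmatrix A W)) :=
  stmt10_general A hA2
end
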